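/- arXiv:1308.0109 — 2 statements merged into one kernel-verified Lean document; each statement's English description precedes it below -/
import Mathlib

section
/- Let C(r,t) for 0 ≤ r, given radius a > 0 and diffusion coefficient D > 0, be defined by C(r,t) = (3/(8πa³))·[erf((a−r)/(2√(Dt))) + erf((a+r)/(2√(Dt)))] + (3/(4πa³ r))·√(Dt/π)·[exp(−(a+r)²/(4Dt)) − exp(−(a−r)²/(4Dt))]. Then 4π ∫₀ᵃ C(r,t)·r² dr = erf(a/√(Dt)) + (1/a)·√(Dt/π)·[(1 − 2Dt/a²)·exp(−a²/(Dt)) + 2Dt/a² − 3]. -/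
open Real

noncomputable def erf (x : ℝ) : ℝ := (2 / Real.sqrt π) * ∫ y in (0:ℝ)..x, Real.exp (-y^2)

/-- Concentration due to a molecule initially uniformly distributed in a sphere of radius `a`. -/
noncomputable def C (a D r t : ℝ) : ℝ :=
  (3 / (8 * π * a^3)) *
      (erf ((a - r) / (2 * Real.sqrt (D * t))) + erf ((a + r) / (2 * Real.sqrt (D * t)))) +
    (3 / (4 * π * a^3 * r)) * Real.sqrt (D * t / π) *
      (Real.exp (-(a + r)^2 / (4 * D * t)) - Real.exp (-(a - r)^2 / (4 * D * t)))

lemma erf_zero : erf 0 = 0 := by simp [erf]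

lemma erf_hasDerivAt (x : ℝ) :
    HasDerivAt erf ((2 / Real.sqrt π) * Real.exp (-x^2)) x := by
  have hc : Continuous fun y : ℝ => Real.exp (-y^2) := by continuity
  have h : HasDerivAt (fun x => ∫ y in (0:ℝ)..x, Real.exp (-y^2)) (Real.exp (-x^2)) x :=
    intervalIntegral.integral_hasDerivAt_right (hc.intervalIntegrable _ _)
      (hc.stronglyMeasurableAtFilter _ _) hc.continuousAt
  exact h.const_mul (2 / Real.sqrt π)

lemma erf_continuous : Continuous erf :=
  Differentiable.continuous (fun x => (erf_hasDerivAt x).differentiableAt)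

lemma F_hasDerivAt (a u : ℝ) (ha : 0 < a) (hu : 0 < u) (r : ℝ) :
    HasDerivAt (fun r =>
      ((r^3 - a^3)/(2*a^3)) * erf ((a-r)/(2*u)) + ((r^3 + a^3)/(2*a^3)) * erf ((a+r)/(2*u)) +
      (u / Real.sqrt π) *
        ((2*u^2/a^3 - 1/a - r/a^2 - r^2/a^3) * Real.exp (-(a-r)^2/(4*u^2)) +
         (1/a - 2*u^2/a^3 - r/a^2 + r^2/a^3) * Real.exp (-(a+r)^2/(4*u^2))))
      ((3/(2*a^3)) * r^2 * (erf ((a-r)/(2*u)) + erf ((a+r)/(2*u))) +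
        (3/a^3) * (u / Real.sqrt π) * r *
          (Real.exp (-(a+r)^2/(4*u^2)) - Real.exp (-(a-r)^2/(4*u^2)))) r := by
  have hsp : 0 < Real.sqrt π := Real.sqrt_pos.mpr Real.pi_pos
  have hm : HasDerivAt (fun r : ℝ => (a - r)/(2*u)) (-1/(2*u)) r := by
    simpa using ((hasDerivAt_const r a).sub (hasDerivAt_id r)).div_const (2*u)
  have hp : HasDerivAt (fun r : ℝ => (a + r)/(2*u)) (1/(2*u)) r := by
    simpa using ((hasDerivAt_const r a).add (hasDerivAt_id r)).div_const (2*u)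
  have hem : HasDerivAt (fun r : ℝ => erf ((a-r)/(2*u)))
      ((2 / Real.sqrt π) * Real.exp (-((a-r)/(2*u))^2) * (-1/(2*u))) r :=
    (erf_hasDerivAt _).comp r hm
  have hep : HasDerivAt (fun r : ℝ => erf ((a+r)/(2*u)))
      ((2 / Real.sqrt π) * Real.exp (-((a+r)/(2*u))^2) * (1/(2*u))) r :=
    (erf_hasDerivAt _).comp r hp
  have hxm : HasDerivAt (fun r : ℝ => Real.exp (-(a-r)^2/(4*u^2)))
      (Real.exp (-(a-r)^2/(4*u^2)) * (-(2*(a-r)^1*(0-1))/(4*u^2))) r := by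
    have h1 : HasDerivAt (fun r : ℝ => -(a-r)^2/(4*u^2)) (-(2*(a-r)^1*(0-1))/(4*u^2)) r :=
      ((((hasDerivAt_const r a).sub (hasDerivAt_id r)).pow 2).neg).div_const (4*u^2)
    simpa [mul_comm] using h1.exp
  have hxp : HasDerivAt (fun r : ℝ => Real.exp (-(a+r)^2/(4*u^2)))
      (Real.exp (-(a+r)^2/(4*u^2)) * (-(2*(a+r)^1*(0+1))/(4*u^2))) r := by
    have h1 : HasDerivAt (fun r : ℝ => -(a+r)^2/(4*u^2)) (-(2*(a+r)^1*(0+1))/(4*u^2)) r :=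
      ((((hasDerivAt_const r a).add (hasDerivAt_id r)).pow 2).neg).div_const (4*u^2)
    simpa [mul_comm] using h1.exp
  have hq1 : HasDerivAt (fun r : ℝ => (r^3 - a^3)/(2*a^3)) (3*r^2/(2*a^3)) r := by
    simpa using (((hasDerivAt_id r).pow 3).sub (hasDerivAt_const r (a^3))).div_const (2*a^3)
  have hq2 : HasDerivAt (fun r : ℝ => (r^3 + a^3)/(2*a^3)) (3*r^2/(2*a^3)) r := by
    simpa using (((hasDerivAt_id r).pow 3).add (hasDerivAt_const r (a^3))).div_const (2*a^3)
  have hq3 : HasDerivAt (fun r : ℝ => 2*u^2/a^3 - 1/a - r/a^2 - r^2/a^3)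
      (0 - 1/a^2 - 2*r/a^3) r := by
    have := (((hasDerivAt_const r (2*u^2/a^3 - 1/a)).sub
      ((hasDerivAt_id r).div_const (a^2))).sub (((hasDerivAt_id r).pow 2).div_const (a^3)))
    refine this.congr_deriv ?_
    simp
  have hq4 : HasDerivAt (fun r : ℝ => 1/a - 2*u^2/a^3 - r/a^2 + r^2/a^3)
      (0 - 1/a^2 + 2*r/a^3) r := by
    have := (((hasDerivAt_const r (1/a - 2*u^2/a^3)).sub
      ((hasDerivAt_id r).div_const (a^2))).add (((hasDerivAt_id r).pow 2).div_const (a^3)))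
    refine this.congr_deriv ?_
    simp
  have H := ((hq1.mul hem).add (hq2.mul hep)).add
    (((hq3.mul hxm).add (hq4.mul hxp)).const_mul (u / Real.sqrt π))
  refine H.congr_deriv ?_
  have e1 : (-((a-r)/(2*u))^2 : ℝ) = -(a-r)^2/(4*u^2) := by
    rw [div_pow]; ring
  have e2 : (-((a+r)/(2*u))^2 : ℝ) = -(a+r)^2/(4*u^2) := by
    rw [div_pow]; ring
  rw [e1, e2]
  field_simp
  ring

theorem stmt_3 (a D t : ℝ) (ha : 0 < a) (hD : 0 < D) (ht : 0 < t) :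
    4 * π * ∫ r in (0:ℝ)..a, C a D r t * r^2 =
      erf (a / Real.sqrt (D * t)) +
        (1 / a) * Real.sqrt (D * t / π) *
          ((1 - 2 * D * t / a^2) * Real.exp (-a^2 / (D * t)) + 2 * D * t / a^2 - 3) := by
  have hπ : 0 < π := Real.pi_pos
  have hsp : 0 < Real.sqrt π := Real.sqrt_pos.mpr hπ
  set u := Real.sqrt (D * t) with hu_def
  have hu : 0 < u := Real.sqrt_pos.mpr (by positivity)
  have hu2 : u ^ 2 = D * t := Real.sq_sqrt (by positivity)
  have hsq : Real.sqrt (D * t / π) = u / Real.sqrt π := by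
    rw [Real.sqrt_div (by positivity) π]
  -- the nice form of the integrand
  set g : ℝ → ℝ := fun r =>
    (3/(2*a^3)) * r^2 * (erf ((a-r)/(2*u)) + erf ((a+r)/(2*u))) +
      (3/a^3) * (u / Real.sqrt π) * r *
        (Real.exp (-(a+r)^2/(4*u^2)) - Real.exp (-(a-r)^2/(4*u^2))) with hg
  have hint : ∀ r : ℝ, C a D r t * r^2 = g r / (4*π) := by
    intro r
    rcases eq_or_ne r 0 with h0 | h0
    · subst h0; simp [hg]
    · simp only [C, hg, hsq, show (4:ℝ) * D * t = 4 * u^2 by rw [hu2]; ring, ← hu_def]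
      field_simp
      ring
  have hieq : (∫ r in (0:ℝ)..a, C a D r t * r^2) = (∫ r in (0:ℝ)..a, g r) / (4*π) := by
    rw [intervalIntegral.integral_congr fun r _ => hint r, intervalIntegral.integral_div]
  have hgc : Continuous g := by
    rw [hg]
    have c1 : Continuous fun r : ℝ => (a - r)/(2*u) :=
      (continuous_const.sub continuous_id).div_const _
    have c2 : Continuous fun r : ℝ => (a + r)/(2*u) :=
      (continuous_const.add continuous_id).div_const _
    have c3 : Continuous fun r : ℝ => -(a + r)^2/(4*u^2) :=
      (((continuous_const.add continuous_id).pow 2).neg).div_const _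
    have c4 : Continuous fun r : ℝ => -(a - r)^2/(4*u^2) :=
      (((continuous_const.sub continuous_id).pow 2).neg).div_const _
    exact ((continuous_const.mul (continuous_pow 2)).mul
        ((erf_continuous.comp c1).add (erf_continuous.comp c2))).add
      ((continuous_const.mul continuous_id).mul
        ((Real.continuous_exp.comp c3).sub (Real.continuous_exp.comp c4)))
  have hftc : (∫ r in (0:ℝ)..a, g r) =
      (((a^3 - a^3)/(2*a^3)) * erf ((a-a)/(2*u)) + ((a^3 + a^3)/(2*a^3)) * erf ((a+a)/(2*u)) +
        (u / Real.sqrt π) *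
          ((2*u^2/a^3 - 1/a - a/a^2 - a^2/a^3) * Real.exp (-(a-a)^2/(4*u^2)) +
           (1/a - 2*u^2/a^3 - a/a^2 + a^2/a^3) * Real.exp (-(a+a)^2/(4*u^2)))) -
      ((((0:ℝ)^3 - a^3)/(2*a^3)) * erf ((a-0)/(2*u)) + (((0:ℝ)^3 + a^3)/(2*a^3)) * erf ((a+0)/(2*u)) +
        (u / Real.sqrt π) *
          ((2*u^2/a^3 - 1/a - 0/a^2 - (0:ℝ)^2/a^3) * Real.exp (-(a-0)^2/(4*u^2)) +
           (1/a - 2*u^2/a^3 - 0/a^2 + (0:ℝ)^2/a^3) * Real.exp (-(a+0)^2/(4*u^2)))) := by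
    refine intervalIntegral.integral_eq_sub_of_hasDerivAt
      (fun x _ => F_hasDerivAt a u ha hu x) (hgc.intervalIntegrable _ _)
  rw [hieq, hftc]
  rw [show (a - a : ℝ) = 0 by ring, show ((0:ℝ)/(2*u)) = 0 by simp, erf_zero,
    show (a + a)/(2*u) = a/u by field_simp; ring,
    show (-(0:ℝ)^2/(4*u^2)) = 0 by simp,
    show (-(a+a)^2/(4*u^2) : ℝ) = -a^2/u^2 by field_simp; ring,
    show (a - 0 : ℝ) = a by ring, show (a + 0 : ℝ) = a by ring,
    hsq, show (-a^2/(D*t) : ℝ) = -a^2/u^2 by rw [← hu2],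
    show (2:ℝ) * D * t = 2*u^2 by rw [hu2]; ring, Real.exp_zero]
  field_simp
  ring
end

section
/- If X₁ and X₂ are independent Poisson random variables with positive means λ₁ and λ₂, and w₁, w₂ are distinct positive integers with w₁ ≠ w₂ and not both equal to 1, then the weighted sum w₁X₁ + w₂X₂ is not Poisson distributed (for instance if w₁ = 1, w₂ = 2, there exists k with P(w₁X₁ + w₂X₂ = k) differing from any Poisson pmf). -/
open MeasureTheory ProbabilityTheory

def IsPoisson {Ω : Type*} [MeasurableSpace Ω] (μ : Measure Ω) (X : Ω → ℕ) (l : ℝ) : Prop :=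
  ∀ k : ℕ, μ {ω | X ω = k} = ENNReal.ofReal (l ^ k * Real.exp (-l) / Nat.factorial k)

/-- A weighted sum `w₁X₁ + w₂X₂` of independent Poisson variables with distinct positive
integer weights is not Poisson distributed. -/
theorem stmt_10 {Ω : Type*} [MeasurableSpace Ω] (μ : Measure Ω) [IsProbabilityMeasure μ]
    (X₁ X₂ : Ω → ℕ) (hX₁ : Measurable X₁) (hX₂ : Measurable X₂)
    (l₁ l₂ : ℝ) (hl₁ : 0 < l₁) (hl₂ : 0 < l₂)
    (hP₁ : IsPoisson μ X₁ l₁) (hP₂ : IsPoisson μ X₂ l₂)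
    (hind : IndepFun X₁ X₂ μ)
    (w₁ w₂ : ℕ) (hw₁ : 0 < w₁) (hw₂ : 0 < w₂) (hne : w₁ ≠ w₂) :
    ¬ ∃ m : ℝ, 0 ≤ m ∧ IsPoisson μ (fun ω => w₁ * X₁ ω + w₂ * X₂ ω) m := by
  rintro ⟨m, hm, hP⟩
  have hind' : ∀ a b : ℕ, μ ({ω | X₁ ω = a} ∩ {ω | X₂ ω = b})
      = μ {ω | X₁ ω = a} * μ {ω | X₂ ω = b} := by
    intro a b
    have := hind.measure_inter_preimage_eq_mul {a} {b}
      (MeasurableSet.singleton a) (MeasurableSet.singleton b)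
    simpa [Set.preimage, Set.mem_singleton_iff] using this
  -- k = 0
  have h0set : {ω | w₁ * X₁ ω + w₂ * X₂ ω = 0} = {ω | X₁ ω = 0} ∩ {ω | X₂ ω = 0} := by
    ext ω
    simp [Nat.add_eq_zero, Nat.mul_eq_zero, hw₁.ne', hw₂.ne']
  have h0 := hP 0
  rw [h0set, hind' 0 0, hP₁ 0, hP₂ 0] at h0
  have hexp := fun x : ℝ => (Real.exp_pos x).le
  rw [← ENNReal.ofReal_mul (by positivity)] at h0
  simp only [pow_zero, Nat.factorial_zero, Nat.cast_one, one_mul, div_one,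
    ← Real.exp_add, ← neg_add] at h0
  have hm_eq : m = l₁ + l₂ := by
    have := (ENNReal.ofReal_eq_ofReal_iff (hexp _) (hexp _)).mp h0
    have := Real.exp_eq_exp.mp this
    linarith
  have hmpos : 0 < m := by rw [hm_eq]; linarith
  -- k = 1
  have h1 := hP 1
  simp only [pow_one, Nat.factorial_one, Nat.cast_one, div_one] at h1
  rcases eq_or_ne w₁ 1 with rfl | hw₁'
  · -- w₁ = 1, w₂ ≥ 2
    have hw₂2 : 2 ≤ w₂ := by omega
    have hset : {ω | 1 * X₁ ω + w₂ * X₂ ω = 1} = {ω | X₁ ω = 1} ∩ {ω | X₂ ω = 0} := by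
      ext ω
      simp only [Set.mem_setOf_eq, Set.mem_inter_iff, one_mul]
      constructor
      · intro h
        have hb : X₂ ω = 0 := by
          by_contra hb
          have : 2 ≤ w₂ * X₂ ω := le_trans hw₂2 (Nat.le_mul_of_pos_right _ (Nat.pos_of_ne_zero hb))
          omega
        rw [hb, Nat.mul_zero, Nat.add_zero] at h
        exact ⟨h, hb⟩
      · rintro ⟨h1, h2⟩; simp [h1, h2]
    rw [hset, hind' 1 0, hP₁ 1, hP₂ 0] at h1
    rw [← ENNReal.ofReal_mul (by positivity)] at h1
    have := (ENNReal.ofReal_eq_ofReal_iff (by positivity) (by positivity)).mp h1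
    simp only [pow_one, pow_zero, Nat.factorial_one, Nat.factorial_zero, Nat.cast_one,
      div_one, one_mul] at this
    rw [hm_eq] at this
    have hrw : l₁ * Real.exp (-l₁) * Real.exp (-l₂) = l₁ * Real.exp (-(l₁ + l₂)) := by
      rw [neg_add, Real.exp_add]; ring
    rw [hrw] at this
    have := mul_right_cancel₀ (Real.exp_pos _).ne' this
    linarith
  rcases eq_or_ne w₂ 1 with rfl | hw₂'
  · -- w₂ = 1, w₁ ≥ 2
    have hw₁2 : 2 ≤ w₁ := by omega
    have hset : {ω | w₁ * X₁ ω + 1 * X₂ ω = 1} = {ω | X₁ ω = 0} ∩ {ω | X₂ ω = 1} := by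
      ext ω
      simp only [Set.mem_setOf_eq, Set.mem_inter_iff, one_mul]
      constructor
      · intro h
        have ha : X₁ ω = 0 := by
          by_contra ha
          have : 2 ≤ w₁ * X₁ ω := le_trans hw₁2 (Nat.le_mul_of_pos_right _ (Nat.pos_of_ne_zero ha))
          omega
        rw [ha, Nat.mul_zero, Nat.zero_add] at h
        exact ⟨ha, h⟩
      · rintro ⟨h1, h2⟩; simp [h1, h2]
    rw [hset, hind' 0 1, hP₁ 0, hP₂ 1] at h1
    rw [← ENNReal.ofReal_mul (by positivity)] at h1
    have := (ENNReal.ofReal_eq_ofReal_iff (by positivity) (by positivity)).mp h1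
    simp only [pow_one, pow_zero, Nat.factorial_one, Nat.factorial_zero, Nat.cast_one,
      div_one, one_mul] at this
    rw [hm_eq] at this
    have hrw : Real.exp (-l₁) * (l₂ * Real.exp (-l₂)) = l₂ * Real.exp (-(l₁ + l₂)) := by
      rw [neg_add, Real.exp_add]; ring
    rw [hrw] at this
    have := mul_right_cancel₀ (Real.exp_pos _).ne' this
    linarith
  · -- both weights ≥ 2
    have hw₁2 : 2 ≤ w₁ := by omega
    have hw₂2 : 2 ≤ w₂ := by omega
    have hset : {ω | w₁ * X₁ ω + w₂ * X₂ ω = 1} = (∅ : Set Ω) := by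
      ext ω
      simp only [Set.mem_setOf_eq, Set.mem_empty_iff_false, iff_false]
      intro h
      rcases Nat.eq_zero_or_pos (X₁ ω) with ha | ha
      · rcases Nat.eq_zero_or_pos (X₂ ω) with hb | hb
        · simp [ha, hb] at h
        · have : 2 ≤ w₂ * X₂ ω := le_trans hw₂2 (Nat.le_mul_of_pos_right _ hb)
          omega
      · have : 2 ≤ w₁ * X₁ ω := le_trans hw₁2 (Nat.le_mul_of_pos_right _ ha)
        omega
    rw [hset, measure_empty] at h1
    have : ENNReal.ofReal (m * Real.exp (-m)) ≠ 0 := by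
      simp only [ne_eq, ENNReal.ofReal_eq_zero, not_le]
      positivity
    exact this h1.symm
end
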